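/- The Alexander grading defines a filtration on the lattice chain complex: for every characteristic vector K for M, every E ⊆ V and every v ∈ E, one has A([K,E]) − A([K, E∖{v}]) + a_v(K,E) = a_v(K + 2v₀*, E) and A([K,E]) − A([K + 2v*, E∖{v}]) + b_v(K,E) = b_v(K + 2v₀*, E); in particular both left-hand sides are nonnegative, so each component of ∂[K,E] has Alexander grading at most A([K,E]). -/

import Mathlib

open Finset

variable {V : Type*}

/-- `M` is negative definite: `xᵀMx < 0` for every nonzero `x ∈ ℝ^V`. -/
def NegDef [Fintype V] (M : V → V → ℤ) : Prop :=
  ∀ x : V → ℝ, x ≠ 0 → (∑ v, ∑ w, (M v w : ℝ) * x v * x w) < 0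

/-- `K` is a characteristic vector for `M`: `K(v) ≡ v·v (mod 2)` for all `v`. -/
def IsChar (M : V → V → ℤ) (K : V → ℤ) : Prop :=
  ∀ v, Int.ModEq 2 (K v) (M v v)

/-- `f(K, I) = (1/2)(Σ_{v∈I} K(v) + (Σ_{v∈I} v)·(Σ_{v∈I} v))` (an exact integer division
for characteristic `K`). -/
def latF (M : V → V → ℤ) (K : V → ℤ) (I : Finset V) : ℤ :=
  ((∑ v ∈ I, K v) + ∑ v ∈ I, ∑ w ∈ I, M v w) / 2

/-- `g(K, E) = min_{I ⊆ E} f(K, I)`. -/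
def latG (M : V → V → ℤ) (K : V → ℤ) (E : Finset V) : ℤ :=
  (E.powerset.image (latF M K)).min'
    ⟨_, Finset.mem_image_of_mem _ (Finset.empty_mem_powerset E)⟩

/-- `B_v(K, E) = min { f(K, I) : v ∈ I ⊆ E }` (for `v ∈ E`). -/
def latB [DecidableEq V] (M : V → V → ℤ) (K : V → ℤ) (E : Finset V) (v : V) : ℤ :=
  ((E.erase v).powerset.image (fun I => latF M K (insert v I))).min'
    ⟨_, Finset.mem_image_of_mem _ (Finset.empty_mem_powerset _)⟩

/-- `a_v(K,E) = A_v(K,E) - g(K,E) = g(K, E∖{v}) - g(K,E)`. -/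
def lata [DecidableEq V] (M : V → V → ℤ) (K : V → ℤ) (E : Finset V) (v : V) : ℤ :=
  latG M K (E.erase v) - latG M K E

/-- `b_v(K,E) = B_v(K,E) - g(K,E)`. -/
def latb [DecidableEq V] (M : V → V → ℤ) (K : V → ℤ) (E : Finset V) (v : V) : ℤ :=
  latB M K E v - latG M K E

/-- The intersection matrix of the graph obtained by attaching the framing `m₀` to the extra
vertex `v₀ = none`, joined to `G` by the edges recorded by `e`. -/
def Mext (M : V → V → ℤ) (e : V → ℤ) (m₀ : ℤ) : Option V → Option V → ℤ := fun x y =>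
  match x, y with
  | some v, some w => M v w
  | some v, none => e v
  | none, some w => e w
  | none, none => m₀

/-- The coefficients of `Σ = v₀ + Σ_{v∈V} a_v·v`: `a = −M⁻¹e`, the unique solution of
`w·Σ = 0` for all `w ∈ V`. -/
noncomputable def sigmaC [Fintype V] [DecidableEq V] (M : V → V → ℤ) (e : V → ℤ) : V → ℚ :=
  fun v => -∑ u, ((Matrix.of fun a b => (M a b : ℚ))⁻¹ v u) * e u

/-- The rational homology class `Σ = v₀ + Σ_{v∈V} a_v·v` (coordinates). -/
noncomputable def sigmaV [Fintype V] [DecidableEq V] (M : V → V → ℤ) (e : V → ℤ) :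
    Option V → ℚ
  | none => 1
  | some v => sigmaC M e v

/-- The unique characteristic extension `L_{[K,E]}` of `K` over `v₀` (for the framing `m₀`)
with `a_{v₀}(L, E∪{v₀}) = b_{v₀}(L, E∪{v₀}) = 0`:
`L(v₀) = −m₀ + 2g(K,E) − 2g(K+2v₀*,E)`. -/
def LextV [DecidableEq V] (M : V → V → ℤ) (e : V → ℤ) (m₀ : ℤ) (K : V → ℤ) (E : Finset V) :
    Option V → ℤ
  | some v => K v
  | none => -m₀ + 2 * latG M K E - 2 * latG M (fun w => K w + 2 * e w) E

/-- The Alexander grading `A([K,E]) = (1/2)(L_{[K,E]}(Σ) + Σ·Σ)`, computed with the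
framing `m₀` on `v₀`. -/
noncomputable def AlexAt [Fintype V] [DecidableEq V] (M : V → V → ℤ) (e : V → ℤ) (m₀ : ℤ)
    (K : V → ℤ) (E : Finset V) : ℚ :=
  (1 / 2) * ((∑ x : Option V, (LextV M e m₀ K E x : ℚ) * sigmaV M e x)
    + ∑ x : Option V, ∑ y : Option V, (Mext M e m₀ x y : ℚ) * sigmaV M e x * sigmaV M e y)

/-- The Alexander grading `A([K,E])` (independent of the framing; computed with framing `0`). -/
noncomputable def Alex [Fintype V] [DecidableEq V] (M : V → V → ℤ) (e : V → ℤ)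
    (K : V → ℤ) (E : Finset V) : ℚ :=
  AlexAt M e 0 K E

/-!
Writing `σ` for the coefficients of `Σ`, the equations `w·Σ = 0` give `Mσ = −e`, hence
`Σ·Σ = Σ_w e(w)σ(w)` and `A([K,E]) = ½ Σ_w (K(w) + e(w))σ(w) + g(K,E) − g(K+2v₀*,E)`.
The first summand does not depend on `E`, and replacing `K` by `K + 2v*` lowers it by `e(v)`.
On the lattice side, `f(K, I ∪ {v}) = f(K + 2v*, I) + f(K, {v})`, so that
`B_v(K,E) = g(K + 2v*, E∖{v}) + f(K,{v})`. Both identities are then bookkeeping, and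
nonnegativity is `g(K,E) ≤ g(K,E∖{v})` and `g(K,E) ≤ B_v(K,E)`.
-/

section Lattice

variable {M : V → V → ℤ} {K : V → ℤ}

theorem IsChar.shift (hK : IsChar M K) (c : V → ℤ) : IsChar M fun w => K w + 2 * c w :=
  fun w => (Int.add_mul_emod_self_left (K w) 2 (c w)).trans (hK w)

theorem IsChar.two_dvd_add_diag (hK : IsChar M K) (a : V) : 2 ∣ K a + M a a := by
  have := (hK a).dvd
  omega

variable (M K)

theorem latG_le {E I : Finset V} (h : I ⊆ E) : latG M K E ≤ latF M K I :=
  min'_le _ _ (mem_image_of_mem _ (mem_powerset.mpr h))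

theorem exists_latG_eq (E : Finset V) : ∃ I ⊆ E, latF M K I = latG M K E := by
  obtain ⟨I, hI, hEq⟩ := mem_image.mp (min'_mem (E.powerset.image (latF M K)) _)
  exact ⟨I, mem_powerset.mp hI, hEq⟩

theorem latG_anti {E₁ E₂ : Finset V} (h : E₁ ⊆ E₂) : latG M K E₂ ≤ latG M K E₁ := by
  obtain ⟨I, hI, hEq⟩ := exists_latG_eq M K E₁
  exact hEq ▸ latG_le M K (hI.trans h)

variable [DecidableEq V]

theorem latB_le (E : Finset V) (v : V) {I : Finset V} (h : I ⊆ E.erase v) :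
    latB M K E v ≤ latF M K (insert v I) :=
  min'_le _ _ (mem_image_of_mem _ (mem_powerset.mpr h))

theorem exists_latB_eq (E : Finset V) (v : V) :
    ∃ I ⊆ E.erase v, latF M K (insert v I) = latB M K E v := by
  obtain ⟨I, hI, hEq⟩ := mem_image.mp
    (min'_mem ((E.erase v).powerset.image fun I => latF M K (insert v I)) _)
  exact ⟨I, mem_powerset.mp hI, hEq⟩

theorem latG_le_latB {E : Finset V} {v : V} (hv : v ∈ E) : latG M K E ≤ latB M K E v := by
  obtain ⟨I, hI, hEq⟩ := exists_latB_eq M K E v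
  exact hEq ▸ latG_le M K (insert_subset hv (hI.trans (erase_subset v E)))

theorem lata_nonneg (E : Finset V) (v : V) : 0 ≤ lata M K E v :=
  sub_nonneg.mpr (latG_anti M K (erase_subset v E))

theorem latb_nonneg {E : Finset V} {v : V} (hv : v ∈ E) : 0 ≤ latb M K E v :=
  sub_nonneg.mpr (latG_le_latB M K hv)

variable {M K}

theorem sum_add_sum_sum_insert (hsym : ∀ v w, M v w = M w v) {a : V}
    {I : Finset V} (ha : a ∉ I) :
    (∑ v ∈ insert a I, K v) + ∑ v ∈ insert a I, ∑ w ∈ insert a I, M v w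
      = ((∑ v ∈ I, (K v + 2 * M a v)) + ∑ v ∈ I, ∑ w ∈ I, M v w) + (K a + M a a) := by
  simp only [sum_insert ha, sum_add_distrib, ← mul_sum, hsym _ a]
  ring

theorem IsChar.two_dvd_sum_add_sum_sum (hsym : ∀ v w, M v w = M w v) (hK : IsChar M K)
    (I : Finset V) : 2 ∣ (∑ v ∈ I, K v) + ∑ v ∈ I, ∑ w ∈ I, M v w := by
  induction I using Finset.induction_on generalizing K with
  | empty => simp
  | insert a I ha ih =>
    rw [sum_add_sum_sum_insert hsym ha]
    exact dvd_add (ih (hK.shift (M a))) (hK.two_dvd_add_diag a)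

theorem IsChar.two_mul_latF (hsym : ∀ v w, M v w = M w v) (hK : IsChar M K) (I : Finset V) :
    2 * latF M K I = (∑ v ∈ I, K v) + ∑ v ∈ I, ∑ w ∈ I, M v w :=
  Int.mul_ediv_cancel' (hK.two_dvd_sum_add_sum_sum hsym I)

theorem IsChar.two_mul_latF_insert (hsym : ∀ v w, M v w = M w v) (hK : IsChar M K) {a : V}
    {I : Finset V} (ha : a ∉ I) :
    2 * latF M K (insert a I) = 2 * latF M (fun w => K w + 2 * M a w) I + (K a + M a a) := by
  rw [hK.two_mul_latF hsym, (hK.shift (M a)).two_mul_latF hsym, sum_add_sum_sum_insert hsym ha]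

theorem IsChar.two_mul_latB (hsym : ∀ v w, M v w = M w v) (hK : IsChar M K) (E : Finset V)
    (v : V) :
    2 * latB M K E v = 2 * latG M (fun w => K w + 2 * M v w) (E.erase v) + (K v + M v v) := by
  have hnot {I : Finset V} (hI : I ⊆ E.erase v) : v ∉ I := fun h => (mem_erase.mp (hI h)).1 rfl
  apply le_antisymm
  · obtain ⟨I, hI, hEq⟩ := exists_latG_eq M (fun w => K w + 2 * M v w) (E.erase v)
    rw [← hEq, ← hK.two_mul_latF_insert hsym (hnot hI)]
    exact mul_le_mul_of_nonneg_left (latB_le M K E v hI) zero_le_two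
  · obtain ⟨I, hI, hEq⟩ := exists_latB_eq M K E v
    rw [← hEq, hK.two_mul_latF_insert hsym (hnot hI)]
    have := latG_le M (fun w => K w + 2 * M v w) hI
    omega

end Lattice

section Alexander

variable [Fintype V] [DecidableEq V] {M : V → V → ℤ}

theorem NegDef.det_ne_zero (hneg : NegDef M) : (Matrix.of fun a b => (M a b : ℚ)).det ≠ 0 := by
  intro h
  obtain ⟨x, hx0, hx⟩ := Matrix.exists_mulVec_eq_zero_iff.mpr h
  have hrow (v : V) : ∑ w, (M v w : ℝ) * (x w : ℝ) = 0 := by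
    have := congrFun hx v
    simp only [Matrix.mulVec, dotProduct, Matrix.of_apply, Pi.zero_apply] at this
    exact_mod_cast this
  have hxR : (fun v => (x v : ℝ)) ≠ 0 := fun h0 =>
    hx0 (funext fun w => by simpa using congrFun h0 w)
  refine (hneg _ hxR).ne ?_
  calc ∑ v, ∑ w, (M v w : ℝ) * x v * x w = ∑ v, (x v : ℝ) * ∑ w, (M v w : ℝ) * x w := by
        refine sum_congr rfl fun v _ => ?_
        rw [mul_sum]
        exact sum_congr rfl fun w _ => by ring
    _ = 0 := by simp [hrow]

theorem mulVec_sigmaC (hneg : NegDef M) (e : V → ℤ) :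
    (Matrix.of fun a b => (M a b : ℚ)).mulVec (sigmaC M e) = -fun u => (e u : ℚ) := by
  have hσ : sigmaC M e = -(Matrix.of fun a b => (M a b : ℚ))⁻¹.mulVec fun u => (e u : ℚ) := by
    funext v
    simp [sigmaC, Matrix.mulVec, dotProduct]
  rw [hσ, Matrix.mulVec_neg, Matrix.mulVec_mulVec,
    Matrix.mul_nonsing_inv _ (isUnit_iff_ne_zero.mpr hneg.det_ne_zero), Matrix.one_mulVec]

theorem sum_mul_sigmaC (hneg : NegDef M) (e : V → ℤ) (v : V) :
    ∑ w, (M v w : ℚ) * sigmaC M e w = -(e v : ℚ) := by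
  simpa [Matrix.mulVec, dotProduct] using congrFun (mulVec_sigmaC hneg e) v

theorem sum_sum_mul_sigmaC (hneg : NegDef M) (e : V → ℤ) :
    ∑ w, ∑ u, (M w u : ℚ) * sigmaC M e w * sigmaC M e u = -∑ w, (e w : ℚ) * sigmaC M e w := by
  rw [← sum_neg_distrib]
  refine sum_congr rfl fun w _ => ?_
  simp only [mul_right_comm _ (sigmaC M e w), ← sum_mul, sum_mul_sigmaC hneg, neg_mul]

theorem alex_eq (hneg : NegDef M) (e K : V → ℤ) (E : Finset V) :
    Alex M e K E = (1 / 2) * ∑ w, ((K w : ℚ) + e w) * sigmaC M e w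
      + latG M K E - latG M (fun w => K w + 2 * e w) E := by
  simp only [Alex, AlexAt, Fintype.sum_option, Mext, sigmaV, LextV, sum_sum_mul_sigmaC hneg,
    add_mul, sum_add_distrib, mul_one]
  push_cast
  ring

theorem sum_shift_mul_sigmaC (hneg : NegDef M) (e K : V → ℤ) (v : V) :
    ∑ w, (((K w + 2 * M v w : ℤ) : ℚ) + e w) * sigmaC M e w
      = ∑ w, ((K w : ℚ) + e w) * sigmaC M e w - 2 * e v := by
  have := sum_mul_sigmaC hneg e v
  simp only [Int.cast_add, Int.cast_mul, Int.cast_ofNat, add_right_comm _ (2 * _ : ℚ), add_mul,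
    sum_add_distrib, mul_assoc, ← mul_sum] at this ⊢
  rw [this]
  ring

theorem alex_sub_add_lata (hneg : NegDef M)
    (e K : V → ℤ) (E : Finset V) (v : V) :
    Alex M e K E - Alex M e K (E.erase v) + (lata M K E v : ℚ)
      = lata M (fun w => K w + 2 * e w) E v := by
  simp only [alex_eq hneg, lata]
  push_cast
  ring

theorem alex_sub_add_latb (hsym : ∀ v w, M v w = M w v) (hneg : NegDef M) (e : V → ℤ)
    {K : V → ℤ} (hK : IsChar M K) (E : Finset V) (v : V) :
    Alex M e K E - Alex M e (fun w => K w + 2 * M v w) (E.erase v) + (latb M K E v : ℚ)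
      = latb M (fun w => K w + 2 * e w) E v := by
  have hB := hK.two_mul_latB hsym E v
  have hB' := (hK.shift e).two_mul_latB hsym E v
  have hcomm : (fun w => K w + 2 * e w + 2 * M v w) = fun w => K w + 2 * M v w + 2 * e w :=
    funext fun w => add_right_comm _ _ _
  rw [hcomm] at hB'
  qify at hB hB'
  simp only [alex_eq hneg, sum_shift_mul_sigmaC hneg, latb]
  push_cast
  linarith

end Alexander

theorem stmt10_general [Fintype V] [DecidableEq V] (M : V → V → ℤ)
    (hsym : ∀ v w, M v w = M w v)
    (hneg : NegDef M)
    (e : V → ℤ)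
    (K : V → ℤ) (hK : IsChar M K) (E : Finset V) (v : V) (hv : v ∈ E) :
    (Alex M e K E - Alex M e K (E.erase v) + (lata M K E v : ℚ)
        = (lata M (fun w => K w + 2 * e w) E v : ℚ)) ∧
    (Alex M e K E - Alex M e (fun w => K w + 2 * M v w) (E.erase v) + (latb M K E v : ℚ)
        = (latb M (fun w => K w + 2 * e w) E v : ℚ)) ∧
    (0 ≤ Alex M e K E - Alex M e K (E.erase v) + (lata M K E v : ℚ)) ∧
    (0 ≤ Alex M e K E - Alex M e (fun w => K w + 2 * M v w) (E.erase v) + (latb M K E v : ℚ)) ∧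
    (-(lata M K E v : ℚ) + Alex M e K (E.erase v) ≤ Alex M e K E) ∧
    (-(latb M K E v : ℚ) + Alex M e (fun w => K w + 2 * M v w) (E.erase v) ≤ Alex M e K E) := by
  have ha := alex_sub_add_lata hneg e K E v
  have hb := alex_sub_add_latb hsym hneg e hK E v
  have ha₀ : (0 : ℚ) ≤ lata M (fun w => K w + 2 * e w) E v := mod_cast lata_nonneg _ _ E v
  have hb₀ : (0 : ℚ) ≤ latb M (fun w => K w + 2 * e w) E v := mod_cast latb_nonneg _ _ hv
  exact ⟨ha, hb, ha ▸ ha₀, hb ▸ hb₀, by linarith, by linarith⟩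

/-- the Alexander grading filters the lattice complex: for `v ∈ E`,
`A([K,E]) − A([K,E∖{v}]) + a_v(K,E) = a_v(K+2v₀*,E)` and
`A([K,E]) − A([K+2v*,E∖{v}]) + b_v(K,E) = b_v(K+2v₀*,E)`; in particular both left-hand
sides are nonnegative, so each component of `∂[K,E]` has Alexander grading at most
`A([K,E])`. -/
theorem stmt10 [Fintype V] [DecidableEq V] (M : V → V → ℤ)
    (hsym : ∀ v w, M v w = M w v)
    (hoff : ∀ v w, v ≠ w → M v w = 0 ∨ M v w = 1)
    (hneg : NegDef M)
    (e : V → ℤ) (he : ∀ v, e v = 0 ∨ e v = 1)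
    (K : V → ℤ) (hK : IsChar M K) (E : Finset V) (v : V) (hv : v ∈ E) :
    (Alex M e K E - Alex M e K (E.erase v) + (lata M K E v : ℚ)
        = (lata M (fun w => K w + 2 * e w) E v : ℚ)) ∧
    (Alex M e K E - Alex M e (fun w => K w + 2 * M v w) (E.erase v) + (latb M K E v : ℚ)
        = (latb M (fun w => K w + 2 * e w) E v : ℚ)) ∧
    (0 ≤ Alex M e K E - Alex M e K (E.erase v) + (lata M K E v : ℚ)) ∧
    (0 ≤ Alex M e K E - Alex M e (fun w => K w + 2 * M v w) (E.erase v) + (latb M K E v : ℚ)) ∧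
    (-(lata M K E v : ℚ) + Alex M e K (E.erase v) ≤ Alex M e K E) ∧
    (-(latb M K E v : ℚ) + Alex M e (fun w => K w + 2 * M v w) (E.erase v) ≤ Alex M e K E) :=
  stmt10_general M hsym hneg e K hK E v hv
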